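/- arXiv:1802.09190 — 2 statements merged into one kernel-verified Lean document; each statement's English description precedes it below -/
import Mathlib

section
/- For all m, n ∈ ℕ and all x ∈ ℝ, H_{n+m}(x) = Σ_{r=0}^{min(n,m)} binom(n,r) · binom(m,r) · (−2)^r · r! · H_{n−r}(x) · H_{m−r}(x). -/
open Finset

/-- Physicists' Hermite polynomial `H_n(x)`. -/
noncomputable def hermiteH (n : ℕ) (x : ℝ) : ℝ :=
  (n.factorial : ℝ) * ∑ m ∈ Finset.range (n / 2 + 1),
    (-1 : ℝ) ^ m * (2 * x) ^ (n - 2 * m) / ((m.factorial : ℝ) * ((n - 2 * m).factorial : ℝ))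

/-!
Differentiating the Gaussian `g x = exp (-x²)` gives Rodrigues' formula `g⁽ᵏ⁾ = (-1)ᵏ Hₖ g`.
Computing `g⁽ⁿ⁺ᵐ⁾` as the `n`-th derivative of `(-1)ᵐ Hₘ g` by the Leibniz rule, with
`Hₘ⁽ʳ⁾ = 2ʳ m!/(m-r)! Hₘ₋ᵣ`, and dividing by `g` gives the expansion.

Rodrigues' formula rests on `Hₙ' = 2n Hₙ₋₁` and `Hₙ₊₁ = 2x Hₙ - 2n Hₙ₋₁`. Both are read off from
the explicit sum written as `Hₙ(x) / n! = ∑ₘ (-1)ᵐ / m! · t_{n-2m}(2x)` with `t_k(u) = uᵏ / k!`: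
differentiation lowers the index of `t_k`, and `u · t_k = (k + 1) t_{k+1}`.
-/

open scoped Nat

section

variable {𝕜 : Type*} [NontriviallyNormedField 𝕜]

-- `t_k`, extended by zero to `k < 0` so that its two rules hold for every `k : ℤ`.
noncomputable def powDivFactorial (k : ℤ) (u : 𝕜) : 𝕜 :=
  if 0 ≤ k then u ^ k.toNat / (k.toNat)! else 0

lemma powDivFactorial_natCast (k : ℕ) (u : 𝕜) : powDivFactorial k u = u ^ k / k ! := by
  simp [powDivFactorial]

lemma powDivFactorial_of_neg {k : ℤ} (hk : k < 0) (u : 𝕜) : powDivFactorial k u = 0 := by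
  simp [powDivFactorial, hk.not_ge]

lemma hasDerivAt_powDivFactorial [CharZero 𝕜] (k : ℤ) (u : 𝕜) :
    HasDerivAt (powDivFactorial k) (powDivFactorial (k - 1) u) u := by
  rcases lt_trichotomy k 0 with hk | rfl | hk
  · rw [powDivFactorial_of_neg (by omega)]
    exact (hasDerivAt_const u 0).congr_of_eventuallyEq
      (.of_forall fun v => powDivFactorial_of_neg hk v)
  · rw [powDivFactorial_of_neg (by omega)]
    exact (hasDerivAt_const u 1).congr_of_eventuallyEq
      (.of_forall fun v => by simp [powDivFactorial])
  · lift k to ℕ using hk.le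
    obtain ⟨j, rfl⟩ : ∃ j, k = j + 1 := ⟨k - 1, by omega⟩
    have hfun : powDivFactorial ((j + 1 : ℕ) : ℤ) = fun v : 𝕜 => v ^ (j + 1) / ((j + 1)! : 𝕜) :=
      funext (powDivFactorial_natCast _)
    rw [hfun, show ((j + 1 : ℕ) : ℤ) - 1 = j by push_cast; ring, powDivFactorial_natCast]
    refine ((hasDerivAt_pow (j + 1) u).div_const ((j + 1)! : 𝕜)).congr_deriv ?_
    rw [Nat.add_sub_cancel, Nat.factorial_succ]
    push_cast
    field_simp

lemma mul_powDivFactorial [CharZero 𝕜] (k : ℤ) (u : 𝕜) :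
    u * powDivFactorial k u = (k + 1) * powDivFactorial (k + 1) u := by
  rcases lt_or_ge k 0 with hk | hk
  · rw [powDivFactorial_of_neg hk]
    rcases (show k + 1 < 0 ∨ k + 1 = 0 by omega) with h | h
    · rw [powDivFactorial_of_neg h]; ring
    · rw [show (k : 𝕜) + 1 = 0 by exact_mod_cast h]; ring
  · lift k to ℕ using hk
    rw [show (k : ℤ) + 1 = ((k + 1 : ℕ) : ℤ) by push_cast; ring, powDivFactorial_natCast,
      powDivFactorial_natCast]
    push_cast [Nat.factorial_succ]
    field_simp
    ring

-- `Hₙ(x) / n!` at `u = 2x`, truncated to `m < N`; the truncation is harmless once `n < 2N`.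
noncomputable def hermiteSum (N : ℕ) (n : ℤ) (u : 𝕜) : 𝕜 :=
  ∑ m ∈ range N, (-1) ^ m / m ! * powDivFactorial (n - 2 * m) u

lemma hermiteSum_of_neg {n : ℤ} (hn : n < 0) (N : ℕ) (u : 𝕜) : hermiteSum N n u = 0 :=
  sum_eq_zero fun m _ => by rw [powDivFactorial_of_neg (by omega), mul_zero]

lemma hermiteSum_eq_of_lt {N M : ℕ} {n : ℤ} (hN : n < 2 * N) (hM : n < 2 * M) (u : 𝕜) :
    hermiteSum N n u = hermiteSum M n u := by
  wlog hNM : N ≤ M generalizing N M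
  · exact (this hM hN (by omega)).symm
  refine sum_subset (range_subset_range.mpr hNM) fun m _ hm => ?_
  rw [powDivFactorial_of_neg (by simp at hm; omega), mul_zero]

lemma hasDerivAt_hermiteSum [CharZero 𝕜] (N : ℕ) (n : ℤ) (u : 𝕜) :
    HasDerivAt (hermiteSum N n) (hermiteSum N (n - 1) u) u := by
  unfold hermiteSum
  refine HasDerivAt.fun_sum fun m _ => ?_
  rw [show n - 1 - 2 * m = n - 2 * m - 1 by ring]
  exact (hasDerivAt_powDivFactorial _ u).const_mul _

lemma mul_hermiteSum [CharZero 𝕜] (N : ℕ) (n : ℤ) (u : 𝕜) :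
    u * hermiteSum (N + 1) n u =
      (n + 1) * hermiteSum (N + 1) (n + 1) u + 2 * hermiteSum N (n - 1) u := by
  have shift : ∑ m ∈ range (N + 1),
      (m : 𝕜) * ((-1) ^ m / m !) * powDivFactorial (n + 1 - 2 * m) u = -hermiteSum N (n - 1) u := by
    rw [sum_range_succ', hermiteSum, ← sum_neg_distrib, CharP.cast_eq_zero, zero_mul, zero_mul,
      add_zero]
    refine sum_congr rfl fun k _ => ?_
    rw [show n + 1 - 2 * ((k + 1 : ℕ) : ℤ) = n - 1 - 2 * k by push_cast; ring, pow_succ,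
      Nat.factorial_succ]
    push_cast
    field_simp
  calc u * hermiteSum (N + 1) n u
      = ∑ m ∈ range (N + 1),
          (-1) ^ m / m ! * ((n - 2 * m + 1) * powDivFactorial (n + 1 - 2 * m) u) := by
        rw [hermiteSum, mul_sum]
        refine sum_congr rfl fun m _ => ?_
        rw [mul_left_comm, mul_powDivFactorial, sub_add_eq_add_sub]
        push_cast
        ring
    _ = (n + 1) * hermiteSum (N + 1) (n + 1) u -
          2 * ∑ m ∈ range (N + 1),
            (m : 𝕜) * ((-1) ^ m / m !) * powDivFactorial (n + 1 - 2 * m) u := by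
        rw [hermiteSum, mul_sum, mul_sum, ← sum_sub_distrib]
        refine sum_congr rfl fun m _ => ?_
        ring
    _ = _ := by rw [shift]; ring

end

lemma hermiteH_eq_hermiteSum {N n : ℕ} (hN : n < 2 * N) (x : ℝ) :
    hermiteH n x = n ! * hermiteSum N n (2 * x) := by
  rw [hermiteSum_eq_of_lt (M := n / 2 + 1) (by omega) (by omega), hermiteH, hermiteSum]
  congr 1
  refine sum_congr rfl fun m hm => ?_
  rw [show (n : ℤ) - 2 * m = ((n - 2 * m : ℕ) : ℤ) by simp at hm; omega,
    powDivFactorial_natCast]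
  ring

lemma factorial_mul_hermiteSum_pred {N n : ℕ} (hN : n ≤ 2 * N) (x : ℝ) :
    n ! * hermiteSum N (n - 1) (2 * x) = n * hermiteH (n - 1) x := by
  cases n with
  | zero => simp [hermiteSum_of_neg]
  | succ k =>
    rw [hermiteH_eq_hermiteSum (N := N) (by omega), Nat.factorial_succ]
    push_cast
    ring_nf

lemma hasDerivAt_hermiteH (n : ℕ) (x : ℝ) :
    HasDerivAt (hermiteH n) (2 * n * hermiteH (n - 1) x) x := by
  have hfun : hermiteH n = fun y : ℝ => n ! * hermiteSum (n + 1) n (2 * y) :=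
    funext (hermiteH_eq_hermiteSum (by omega))
  rw [hfun]
  refine (((hasDerivAt_hermiteSum _ _ _).comp x ((hasDerivAt_id' x).const_mul 2)).const_mul
    (n ! : ℝ)).congr_deriv ?_
  rw [mul_assoc 2, ← factorial_mul_hermiteSum_pred (N := n + 1) (by omega)]
  ring

lemma hermiteH_succ (n : ℕ) (x : ℝ) :
    hermiteH (n + 1) x = 2 * x * hermiteH n x - 2 * n * hermiteH (n - 1) x := by
  rw [hermiteH_eq_hermiteSum (N := n + 1) (by omega),
    hermiteH_eq_hermiteSum (N := n + 1) (by omega), mul_assoc 2 (n : ℝ),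
    ← factorial_mul_hermiteSum_pred (N := n) (by omega), mul_left_comm (2 * x), mul_hermiteSum,
    Nat.factorial_succ]
  push_cast
  ring

lemma contDiff_hermiteH (n : ℕ) {k : WithTop ℕ∞} : ContDiff ℝ k (hermiteH n) := by
  unfold hermiteH
  fun_prop

lemma iteratedDeriv_hermiteH (m r : ℕ) :
    iteratedDeriv r (hermiteH m) = fun x => 2 ^ r * m.descFactorial r * hermiteH (m - r) x := by
  induction r with
  | zero => simp
  | succ r ih =>
    funext x
    rw [iteratedDeriv_succ, ih, ((hasDerivAt_hermiteH (m - r) x).const_mul _).deriv,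
      Nat.descFactorial_succ, Nat.sub_sub]
    push_cast
    ring

lemma iteratedDeriv_gaussian_eq_hermiteH_mul_gaussian (n : ℕ) :
    iteratedDeriv n (fun y => Real.exp (-y ^ 2)) =
      fun x => (-1) ^ n * hermiteH n x * Real.exp (-x ^ 2) := by
  induction n with
  | zero => simp [hermiteH]
  | succ n ih =>
    funext x
    rw [iteratedDeriv_succ, ih, (((hasDerivAt_hermiteH n x).const_mul ((-1) ^ n)).fun_mul
      (hasDerivAt_pow 2 x).fun_neg.exp).deriv, hermiteH_succ]
    ring

lemma hermiteH_add_eq_sum (n m : ℕ) (x : ℝ) :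
    hermiteH (n + m) x = ∑ r ∈ range (n + 1),
      (-2) ^ r * n.choose r * m.descFactorial r * hermiteH (n - r) x * hermiteH (m - r) x := by
  have leibniz : (-1) ^ (n + m) * hermiteH (n + m) x * Real.exp (-x ^ 2) =
      (-1) ^ m * ∑ r ∈ range (n + 1),
        n.choose r * (2 ^ r * m.descFactorial r * hermiteH (m - r) x) *
          ((-1) ^ (n - r) * hermiteH (n - r) x * Real.exp (-x ^ 2)) := by
    rw [← congrFun (iteratedDeriv_gaussian_eq_hermiteH_mul_gaussian (n + m)) x,
      iteratedDeriv_eq_iterate, Function.iterate_add_apply, ← iteratedDeriv_eq_iterate,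
      ← iteratedDeriv_eq_iterate, iteratedDeriv_gaussian_eq_hermiteH_mul_gaussian m]
    simp_rw [mul_assoc ((-1 : ℝ) ^ m)]
    rw [iteratedDeriv_const_mul_field,
      iteratedDeriv_fun_mul (contDiff_hermiteH m).contDiffAt (by fun_prop)]
    simp only [iteratedDeriv_hermiteH, iteratedDeriv_gaussian_eq_hermiteH_mul_gaussian]
  have neg_one_pow_mul_self (k : ℕ) : (-1 : ℝ) ^ k * (-1) ^ k = 1 := by
    rw [← mul_pow]; norm_num
  refine mul_right_cancel₀ (Real.exp_ne_zero (-x ^ 2)) ?_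
  calc hermiteH (n + m) x * Real.exp (-x ^ 2)
      = (-1) ^ (n + m) * ((-1) ^ (n + m) * hermiteH (n + m) x * Real.exp (-x ^ 2)) := by
        linear_combination
          (-(hermiteH (n + m) x * Real.exp (-x ^ 2))) * neg_one_pow_mul_self (n + m)
    _ = _ := by
      rw [leibniz, mul_sum, mul_sum, sum_mul]
      refine sum_congr rfl fun r hr => ?_
      obtain ⟨k, rfl⟩ := Nat.exists_eq_add_of_le (Nat.le_of_lt_succ (mem_range.mp hr))
      have sign : (-1 : ℝ) ^ (r + k + m) * ((-1) ^ m * (-1) ^ k) = (-1) ^ r := by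
        rw [← pow_add, ← pow_add, show r + k + m + (m + k) = r + 2 * (k + m) by ring, pow_add,
          pow_mul]
        norm_num
      rw [Nat.add_sub_cancel_left, neg_pow (2 : ℝ)]
      linear_combination ((r + k).choose r * 2 ^ r * m.descFactorial r * hermiteH (m - r) x *
        hermiteH k x * Real.exp (-x ^ 2)) * sign

theorem burchnall_hermite_expansion (m n : ℕ) (x : ℝ) :
    hermiteH (n + m) x =
      ∑ r ∈ Finset.range (min n m + 1),
        (n.choose r : ℝ) * (m.choose r : ℝ) * (-2 : ℝ) ^ r * (r.factorial : ℝ) *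
          hermiteH (n - r) x * hermiteH (m - r) x := by
  rw [hermiteH_add_eq_sum]
  refine (sum_subset (range_subset_range.mpr (by omega)) fun r hr hr' => ?_).symm.trans
    (sum_congr rfl fun r _ => ?_)
  · rw [Nat.descFactorial_eq_zero_iff_lt.mpr (by simp at hr hr'; omega)]
    simp
  · rw [Nat.descFactorial_eq_factorial_mul_choose]
    push_cast
    ring
end

section
/- Let β > 0, 0 < c < 1, n ∈ ℕ, and t ∈ ℝ. Then for all x ∈ ℝ, M_n(x; β, c·e^{−t}) = Σ_{k=0}^{n} ((−n)_k (β+x)_k / (k! (β)_k)) · M_{n−k}(x; β+k, c) · e^{nt} (1−e^{−t})^k. (These are the orthogonal polynomials for the Toda-modified Meixner weight.) -/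
/-!
With `X = e^t` and `Y = 1/c`, the Meixner polynomials are terminating Gauss series:
`M_n(x; β, c e^{-t}) = ₂F₁(-n, -x; β; 1 - XY)` and
`M_{n-k}(x; β + k, c) = ₂F₁(-(n-k), -x; β + k; 1 - Y)`.
Pfaff's transformation, a consequence of the Chu–Vandermonde identity, expands both the left side
and every inner series on the right in powers of `XY - 1`, resp. `X - 1` and `Y - 1`; the
coefficients then match by the product rule for Pochhammer symbols, and what remains is the
binomial expansion of `XY - 1 = (X - 1) + X (Y - 1)`.
-/

open Finset

/-- Pochhammer symbol `(a)_j = a(a+1)⋯(a+j-1)`. -/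
noncomputable def poch (a : ℝ) (j : ℕ) : ℝ := ∏ i ∈ Finset.range j, (a + i)

/-- Meixner polynomial `M_n(x; β, c)`. -/
noncomputable def meixnerM (n : ℕ) (x β c : ℝ) : ℝ :=
  ∑ k ∈ Finset.range (n + 1),
    poch (-(n : ℝ)) k * poch (-x) k / (poch β k * (k.factorial : ℝ)) * ((c - 1) / c) ^ k

lemma poch_succ (a : ℝ) (j : ℕ) : poch a (j + 1) = poch a j * (a + j) :=
  prod_range_succ _ _

lemma poch_add (a : ℝ) (p q : ℕ) : poch a (p + q) = poch a p * poch (a + p) q := by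
  simp only [poch, prod_range_add, Nat.cast_add, add_assoc]

lemma poch_succ_left (a : ℝ) (j : ℕ) : poch a (j + 1) = a * poch (a + 1) j := by
  rw [add_comm j, poch_add]
  simp [poch]

lemma poch_pos {a : ℝ} (ha : 0 < a) (j : ℕ) : 0 < poch a j :=
  prod_pos fun i _ => by positivity

lemma poch_eq_eval_ascPochhammer (a : ℝ) (j : ℕ) : poch a j = (ascPochhammer ℝ j).eval a := by
  induction j with
  | zero => simp [poch]
  | succ j ih => rw [poch_succ, ih, ascPochhammer_succ_eval]

lemma poch_neg_natCast (M j : ℕ) : poch (-M) j = (-1) ^ j * j.factorial * M.choose j := by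
  rw [poch_eq_eval_ascPochhammer, ascPochhammer_eval_neg_eq_descPochhammer,
    descPochhammer_eval_eq_descFactorial, Nat.descFactorial_eq_factorial_mul_choose]
  push_cast
  ring

/-- Chu–Vandermonde: `₂F₁(-p, d; a; 1) = (a - d)_p / (a)_p`, cleared of denominators. -/
theorem sum_antidiagonal_choose_mul_poch (p : ℕ) (a d : ℝ) :
    ∑ ij ∈ antidiagonal p,
        (p.choose ij.1 : ℝ) * ((-1) ^ ij.1 * poch d ij.1 * poch (a + ij.1) ij.2) =
      poch (a - d) p := by
  induction p generalizing a with
  | zero => simp [poch]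
  | succ p ih =>
    rw [sum_antidiagonal_choose_succ_mul (fun i j => (-1) ^ i * poch d i * poch (a + i) j),
      ← sum_add_distrib, poch_succ_left, sub_add_eq_add_sub, ← ih, mul_sum]
    refine sum_congr rfl fun ij hij => ?_
    obtain ⟨i, j⟩ := ij
    rw [Nat.choose_symm_of_eq_add (mem_antidiagonal.mp hij).symm, poch_succ d i,
      poch_succ_left (a + i) j]
    push_cast
    ring_nf

noncomputable def hyp2F1Coeff (N : ℕ) (b C : ℝ) (k : ℕ) : ℝ :=
  poch (-(N : ℝ)) k * poch b k / (poch C k * (k.factorial : ℝ))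

/-- The terminating hypergeometric series `₂F₁(-N, b; C; z)`. -/
noncomputable def hyp2F1 (N : ℕ) (b C z : ℝ) : ℝ :=
  ∑ k ∈ range (N + 1), hyp2F1Coeff N b C k * z ^ k

lemma meixnerM_eq_hyp2F1 (n : ℕ) (x β c : ℝ) :
    meixnerM n x β c = hyp2F1 n (-x) β ((c - 1) / c) := rfl

lemma factorial_add_eq_choose_mul (i j : ℕ) :
    ((i + j).factorial : ℝ) = (i + j).choose i * i.factorial * j.factorial := by
  rw [← Nat.add_choose_mul_factorial_mul_factorial, Nat.choose_symm_add]
  push_cast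
  ring

/-- Turns the coefficient of `(X - 1) ^ (k + j)` in Pfaff's transformation into a term of the
Chu–Vandermonde sum. -/
lemma hyp2F1Coeff_mul_choose_of_add_le {N k j : ℕ} (h : k + j ≤ N) (d : ℝ) {C : ℝ}
    (hC : 0 < C) :
    hyp2F1Coeff N d C k * (N - k).choose j
      = (-1) ^ (k + j) * poch (-(N : ℝ)) (k + j) / (poch C (k + j) * (k + j).factorial) *
        ((k + j).choose k * ((-1) ^ k * poch d k * poch (C + k) j)) := by
  have hneg : -(N : ℝ) + k = -((N - k : ℕ) : ℝ) := by
    push_cast [Nat.cast_sub (by omega : k ≤ N)]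
    ring
  have hsq : ((-1 : ℝ) ^ (k + j)) ^ 2 = 1 := by rw [← pow_mul, pow_mul', neg_one_sq, one_pow]
  have hCk := (poch_pos hC k).ne'
  have hCkj := (poch_pos (by positivity : 0 < C + k) j).ne'
  have hchoose : ((k + j).choose k : ℝ) ≠ 0 := by
    exact_mod_cast (Nat.choose_pos (Nat.le_add_right k j)).ne'
  rw [hyp2F1Coeff, poch_add, poch_add, hneg, poch_neg_natCast (N - k) j,
    factorial_add_eq_choose_mul]
  field_simp
  linear_combination -(poch (-(N : ℝ)) k * poch d k * ((N - k).choose j : ℝ)) * hsq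

lemma sum_antidiagonal_hyp2F1Coeff_mul_choose {N p : ℕ} (hp : p ≤ N) (B : ℝ) {C : ℝ}
    (hC : 0 < C) :
    ∑ ij ∈ antidiagonal p, hyp2F1Coeff N (C - B) C ij.1 * (N - ij.1).choose ij.2
      = (-1) ^ p * hyp2F1Coeff N B C p := by
  rw [sum_congr rfl fun ij hij => (mem_antidiagonal.mp hij) ▸
      hyp2F1Coeff_mul_choose_of_add_le ((mem_antidiagonal.mp hij).le.trans hp) (C - B) hC,
    ← mul_sum, sum_antidiagonal_choose_mul_poch, sub_sub_cancel, hyp2F1Coeff]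
  ring

lemma hyp2F1Coeff_mul_hyp2F1Coeff {n k : ℕ} (hk : k ≤ n) (d C : ℝ) (m : ℕ) :
    hyp2F1Coeff n d C k * hyp2F1Coeff (n - k) (d + k) (C + k) m
      = (k + m).choose k * hyp2F1Coeff n d C (k + m) := by
  have hneg : -((n - k : ℕ) : ℝ) = -(n : ℝ) + k := by push_cast [Nat.cast_sub hk]; ring
  simp only [hyp2F1Coeff, hneg, poch_add, factorial_add_eq_choose_mul, div_eq_mul_inv, mul_inv]
  have hchoose : ((k + m).choose k : ℝ) ≠ 0 := by
    exact_mod_cast (Nat.choose_pos (Nat.le_add_right k m)).ne'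
  field_simp

lemma sum_range_sum_range_eq_sum_antidiagonal {M : Type*} [AddCommMonoid M] (N : ℕ)
    (f : ℕ → ℕ → M) :
    ∑ k ∈ range (N + 1), ∑ j ∈ range (N - k + 1), f k j
      = ∑ p ∈ range (N + 1), ∑ ij ∈ antidiagonal p, f ij.1 ij.2 := by
  simp only [Nat.sum_antidiagonal_eq_sum_range_succ f, sum_range_diag_flip]
  refine sum_congr rfl fun k hk => ?_
  rw [Nat.sub_add_comm (Nat.le_of_lt_succ (mem_range.mp hk))]

/-- Pfaff's transformation `₂F₁(-N, B; C; z) = (1 - z) ^ N ₂F₁(-N, C - B; C; z / (z - 1))`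
at `z = 1 - X`, multiplied out. -/
theorem hyp2F1_one_sub {C : ℝ} (hC : 0 < C) (N : ℕ) (B X : ℝ) :
    hyp2F1 N B C (1 - X)
      = ∑ k ∈ range (N + 1), hyp2F1Coeff N (C - B) C k * (X - 1) ^ k * X ^ (N - k) := by
  symm
  calc ∑ k ∈ range (N + 1), hyp2F1Coeff N (C - B) C k * (X - 1) ^ k * X ^ (N - k)
      = ∑ k ∈ range (N + 1), ∑ j ∈ range (N - k + 1),
          hyp2F1Coeff N (C - B) C k * (N - k).choose j * (X - 1) ^ (k + j) := by
        refine sum_congr rfl fun k _ => ?_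
        rw [← sub_add_cancel X 1, add_pow, mul_sum]
        refine sum_congr rfl fun j _ => ?_
        rw [sub_add_cancel, one_pow, pow_add]
        ring
    _ = ∑ p ∈ range (N + 1), (∑ ij ∈ antidiagonal p,
          hyp2F1Coeff N (C - B) C ij.1 * (N - ij.1).choose ij.2) * (X - 1) ^ p := by
        rw [sum_range_sum_range_eq_sum_antidiagonal]
        refine sum_congr rfl fun p _ => ?_
        rw [sum_mul]
        exact sum_congr rfl fun ij hij => by rw [mem_antidiagonal.mp hij]
    _ = hyp2F1 N B C (1 - X) := by
        rw [hyp2F1]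
        refine sum_congr rfl fun p hp => ?_
        rw [sum_antidiagonal_hyp2F1Coeff_mul_choose (Nat.le_of_lt_succ (mem_range.mp hp)) B hC,
          show (1 - X) ^ p = (-1) ^ p * (X - 1) ^ p by rw [← mul_pow]; ring]
        ring

theorem hyp2F1_one_sub_mul {β : ℝ} (hβ : 0 < β) (n : ℕ) (b X Y : ℝ) :
    hyp2F1 n b β (1 - X * Y) = ∑ k ∈ range (n + 1),
      hyp2F1Coeff n (β - b) β k * hyp2F1 (n - k) b (β + k) (1 - Y) * (X - 1) ^ k *
        X ^ (n - k) := by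
  rw [hyp2F1_one_sub hβ]
  symm
  calc _ = ∑ k ∈ range (n + 1), ∑ m ∈ range (n - k + 1),
          hyp2F1Coeff n (β - b) β k * hyp2F1Coeff (n - k) (β - b + k) (β + k) m *
            ((X - 1) ^ k * X ^ (n - k) * ((Y - 1) ^ m * Y ^ (n - k - m))) := by
        refine sum_congr rfl fun k _ => ?_
        rw [hyp2F1_one_sub (by positivity), show β + k - b = β - b + k by ring, mul_sum, sum_mul,
          sum_mul]
        exact sum_congr rfl fun m _ => by ring
    _ = ∑ p ∈ range (n + 1), ∑ ij ∈ antidiagonal p,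
          hyp2F1Coeff n (β - b) β ij.1 * hyp2F1Coeff (n - ij.1) (β - b + ij.1) (β + ij.1) ij.2 *
            ((X - 1) ^ ij.1 * X ^ (n - ij.1) * ((Y - 1) ^ ij.2 * Y ^ (n - ij.1 - ij.2))) :=
        sum_range_sum_range_eq_sum_antidiagonal n _
    _ = _ := by
        refine sum_congr rfl fun p hp => ?_
        rw [show X * Y - 1 = (X - 1) + X * (Y - 1) by ring, (Commute.all _ _).add_pow', mul_sum,
          sum_mul]
        refine sum_congr rfl fun ⟨k, m⟩ hkm => ?_
        obtain rfl : k + m = p := mem_antidiagonal.mp hkm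
        have hn : k + m ≤ n := Nat.le_of_lt_succ (mem_range.mp hp)
        rw [hyp2F1Coeff_mul_hyp2F1Coeff (by omega), Nat.sub_sub,
          show n - k = m + (n - (k + m)) by omega, nsmul_eq_mul, pow_add, mul_pow, mul_pow]
        ring

theorem meixner_toda_expansion_first_general (β c : ℝ) (hβ : 0 < β) (hc0 : 0 < c)
    (n : ℕ) (t : ℝ) (x : ℝ) :
    meixnerM n x β (c * Real.exp (-t)) =
      ∑ k ∈ Finset.range (n + 1),
        poch (-(n : ℝ)) k * poch (β + x) k / ((k.factorial : ℝ) * poch β k) *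
          meixnerM (n - k) x (β + k) c * Real.exp (n * t) * (1 - Real.exp (-t)) ^ k := by
  have hz : (c * Real.exp (-t) - 1) / (c * Real.exp (-t)) = 1 - Real.exp t * c⁻¹ := by
    rw [Real.exp_neg]
    field_simp
  rw [meixnerM_eq_hyp2F1, hz, hyp2F1_one_sub_mul hβ]
  refine sum_congr rfl fun k hk => ?_
  have hpow : Real.exp (n * t) = Real.exp t ^ k * Real.exp t ^ (n - k) := by
    rw [Real.exp_nat_mul, ← pow_add, Nat.add_sub_cancel' (Nat.le_of_lt_succ (mem_range.mp hk))]
  have hsub : (1 - Real.exp (-t)) * Real.exp t = Real.exp t - 1 := by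
    rw [Real.exp_neg]
    field_simp
  rw [meixnerM_eq_hyp2F1, show (c - 1) / c = 1 - c⁻¹ by field_simp, hpow, ← hsub, mul_pow,
    hyp2F1Coeff, sub_neg_eq_add, mul_comm (poch β k)]
  ring

theorem meixner_toda_expansion_first (β c : ℝ) (hβ : 0 < β) (hc0 : 0 < c) (hc1 : c < 1)
    (n : ℕ) (t : ℝ) (x : ℝ) :
    meixnerM n x β (c * Real.exp (-t)) =
      ∑ k ∈ Finset.range (n + 1),
        poch (-(n : ℝ)) k * poch (β + x) k / ((k.factorial : ℝ) * poch β k) *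
          meixnerM (n - k) x (β + k) c * Real.exp (n * t) * (1 - Real.exp (-t)) ^ k :=
  meixner_toda_expansion_first_general β c hβ hc0 n t x
end
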